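/- Let m ≥ 1 be an integer and let (U_e) be the generalized Fibonacci sequence with parameter m (so U_e > 0 for e ≥ 1). Then for all integers n ≥ 2, l ≥ 2 and p ≥ 0, the following identity holds in ℚ: ∑_{j=1}^n U_{(n-1)p+j-1}·U_{l-1}^{n-j-1}·U_l^{j-2}·( U_l²·C(n-1, j-1) + (-1)^l·C(n-2, j-2) ) = U_{(n-1)(l+p)+1}, where the powers U_{l-1}^{n-j-1} and U_l^{j-2} are integer (possibly negative) powers taken in ℚ, and C(n-2, j-2) = 0 for j = 1. -/

import Mathlib

/-- The generalized Fibonacci sequence with parameter `m`: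
`U_0 = 0`, `U_1 = 1`, `U_{e+1} = m U_e + U_{e-1}`. -/
def genFibU {R : Type*} [CommRing R] (m : R) : ℕ → R
  | 0 => 0
  | 1 => 1
  | e + 2 => m * genFibU m (e + 1) + genFibU m e

lemma genFibU_add_two {R : Type*} [CommRing R] (m : R) (e : ℕ) :
    genFibU m (e + 2) = m * genFibU m (e + 1) + genFibU m e := rfl

lemma genFibU_add {R : Type*} [CommRing R] (m : R) (a b : ℕ) :
    genFibU m (a + b + 1)
      = genFibU m (a + 1) * genFibU m (b + 1) + genFibU m a * genFibU m b := by
  induction b using Nat.twoStepInduction generalizing a with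
  | zero => simp [genFibU]
  | one => simp only [genFibU, genFibU_add_two]; ring
  | more k ih1 ih2 =>
    have : genFibU m (a + (k + 2) + 1)
        = m * genFibU m (a + (k + 1) + 1) + genFibU m (a + k + 1) := by
      rw [show a + (k + 2) + 1 = (a + k + 1) + 2 from by ring, genFibU_add_two,
        show a + k + 1 + 1 = a + (k + 1) + 1 from by ring]
    rw [this, ih1, ih2, genFibU_add_two (e := k + 1), genFibU_add_two (e := k)]
    ring

lemma genFibU_cassini {R : Type*} [CommRing R] (m : R) (e : ℕ) :
    genFibU m (e + 2) * genFibU m e + (-1 : R) ^ e = genFibU m (e + 1) ^ 2 := by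
  induction e with
  | zero => simp [genFibU]
  | succ k ih =>
    have h1 : genFibU m (k + 3) = m * genFibU m (k + 2) + genFibU m (k + 1) :=
      genFibU_add_two m (k + 1)
    have h2 : genFibU m (k + 2) = m * genFibU m (k + 1) + genFibU m k :=
      genFibU_add_two m k
    linear_combination -ih + genFibU m (k + 1) * h1 - genFibU m (k + 2) * h2

lemma genFibU_pos (m : ℤ) (hm : 1 ≤ m) (e : ℕ) :
    0 ≤ genFibU m e ∧ 0 < genFibU m (e + 1) := by
  induction e with
  | zero => simp [genFibU]
  | succ k ih =>
    refine ⟨ih.2.le, ?_⟩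
    rw [genFibU_add_two]
    nlinarith [ih.1, ih.2]

lemma genFibU_map {R S : Type*} [CommRing R] [CommRing S] (f : R →+* S) (m : R) (e : ℕ) :
    f (genFibU m e) = genFibU (f m) e := by
  induction e using Nat.twoStepInduction with
  | zero => simp [genFibU]
  | one => simp [genFibU]
  | more k ih1 ih2 => simp [genFibU_add_two, ih1, ih2]

lemma genFibU_sum_shift (m : ℚ) (L k : ℕ) : ∀ q : ℕ,
    ∑ i ∈ Finset.range (k + 1),
        (Nat.choose k i : ℚ) * genFibU m L ^ (k - i) * genFibU m (L + 1) ^ i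
          * genFibU m (q + i)
      = genFibU m (q + k * (L + 1)) := by
  induction k with
  | zero => simp
  | succ k ih =>
    intro q
    rw [Finset.sum_range_succ']
    have hsplit : ∀ i ∈ Finset.range (k + 1),
        (Nat.choose (k + 1) (i + 1) : ℚ) * genFibU m L ^ (k + 1 - (i + 1))
            * genFibU m (L + 1) ^ (i + 1) * genFibU m (q + (i + 1))
          = (Nat.choose k i : ℚ) * genFibU m L ^ (k - i) * genFibU m (L + 1) ^ i
              * genFibU m ((q + 1) + i) * genFibU m (L + 1)
            + (Nat.choose k (i + 1) : ℚ) * genFibU m L ^ (k - i) * genFibU m (L + 1) ^ (i + 1)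
              * genFibU m (q + (i + 1)) := by
      intro i hi
      rw [Nat.choose_succ_succ, Nat.succ_sub_succ]
      push_cast
      rw [show q + (i + 1) = (q + 1) + i from by ring]
      ring
    rw [Finset.sum_congr rfl hsplit, Finset.sum_add_distrib, ← Finset.sum_mul, ih (q + 1)]
    have hB : (∑ i ∈ Finset.range (k + 1),
          (Nat.choose k (i + 1) : ℚ) * genFibU m L ^ (k - i) * genFibU m (L + 1) ^ (i + 1)
            * genFibU m (q + (i + 1)))
          + (Nat.choose (k + 1) 0 : ℚ) * genFibU m L ^ (k + 1 - 0) * genFibU m (L + 1) ^ 0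
            * genFibU m (q + 0)
        = genFibU m L * genFibU m (q + k * (L + 1)) := by
      rw [← ih q, Finset.mul_sum]
      conv_lhs => rw [Finset.sum_range_succ]
      conv_rhs => rw [Finset.sum_range_succ']
      rw [add_assoc]
      congr 1
      · apply Finset.sum_congr rfl
        intro i hi
        simp only [Finset.mem_range] at hi
        rw [show k - i = (k - (i + 1)) + 1 from by omega]
        ring
      · simp [Nat.choose_succ_self]
        ring
    rw [add_assoc, hB]
    have := genFibU_add m (q + k * (L + 1)) L
    rw [show q + k * (L + 1) + L + 1 = q + (k + 1) * (L + 1) from by ring] at this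
    rw [this]
    ring_nf

/-- For an integer parameter `m ≥ 1`, in `ℚ`:
`∑_{j=1}^n U_{(n-1)p+j-1} U_{l-1}^{n-j-1} U_l^{j-2} (U_l² C(n-1,j-1) + (-1)^l C(n-2,j-2))
 = U_{(n-1)(l+p)+1}`, where the powers with possibly negative exponents are integer powers
taken in `ℚ`, and `C(n-2, j-2)` is interpreted as `0` when `j = 1`. -/
theorem genFibU_second_row_identity (m : ℤ) (hm : 1 ≤ m)
    (n l p : ℕ) (hn : 2 ≤ n) (hl : 2 ≤ l) :
    ∑ j ∈ Finset.Icc 1 n,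
        (genFibU m ((n - 1) * p + j - 1) : ℚ) *
          (genFibU m (l - 1) : ℚ) ^ ((n : ℤ) - (j : ℤ) - 1) *
          (genFibU m l : ℚ) ^ ((j : ℤ) - 2) *
          ((genFibU m l : ℚ) ^ 2 * (Nat.choose (n - 1) (j - 1) : ℚ) +
            (-1 : ℚ) ^ l * (if 2 ≤ j then (Nat.choose (n - 2) (j - 2) : ℚ) else 0)) =
      (genFibU m ((n - 1) * (l + p) + 1) : ℚ) := by
  obtain ⟨N, rfl⟩ : ∃ N, n = N + 2 := ⟨n - 2, by omega⟩
  obtain ⟨L, rfl⟩ : ∃ L, l = L + 2 := ⟨l - 2, by omega⟩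
  have hcast : ∀ e : ℕ, ((genFibU m e : ℤ) : ℚ) = genFibU (m : ℚ) e := fun e => by
    simpa using genFibU_map (Int.castRingHom ℚ) m e
  have hpos : ∀ e : ℕ, (0 : ℚ) < genFibU (m : ℚ) (e + 1) := fun e => by
    rw [← hcast]
    exact_mod_cast (genFibU_pos m hm e).2
  set c : ℚ := genFibU (m : ℚ) (L + 1) with hc_def
  set b : ℚ := genFibU (m : ℚ) (L + 2) with hb_def
  set a : ℚ := genFibU (m : ℚ) (L + 3) with ha_def
  have hc : c ≠ 0 := (hpos L).ne'
  have hb : b ≠ 0 := (hpos (L + 1)).ne'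
  apply mul_right_cancel₀ (b := c * b) (mul_ne_zero hc hb)
  rw [Finset.sum_mul, ← Finset.Ico_add_one_right_eq_Icc, Finset.sum_Ico_eq_sum_range]
  have hterm : ∀ i ∈ Finset.range ((N + 2).succ - 1),
      genFibU (m : ℚ) ((N + 2 - 1) * p + (1 + i) - 1) *
          genFibU (m : ℚ) (L + 2 - 1) ^ (((N + 2 : ℕ) : ℤ) - ((1 + i : ℕ) : ℤ) - 1) *
          b ^ (((1 + i : ℕ) : ℤ) - 2) *
          (b ^ 2 * (Nat.choose (N + 2 - 1) (1 + i - 1) : ℚ) +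
            (-1 : ℚ) ^ (L + 2) *
              (if 2 ≤ 1 + i then (Nat.choose (N + 2 - 2) (1 + i - 2) : ℚ) else 0)) * (c * b)
        = genFibU (m : ℚ) ((N + 1) * p + i) * c ^ (N + 1 - i) * b ^ i *
            (b ^ 2 * (Nat.choose (N + 1) i : ℚ) +
              (-1 : ℚ) ^ (L + 2) * (if 1 ≤ i then (Nat.choose N (i - 1) : ℚ) else 0)) := by
    intro i hi
    simp only [Finset.mem_range, Nat.succ_sub_one] at hi
    rw [show N + 2 - 1 = N + 1 from by omega,
        show (N + 1) * p + (1 + i) - 1 = (N + 1) * p + i from by omega,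
        show L + 2 - 1 = L + 1 from by omega,
        show 1 + i - 1 = i from by omega,
        show N + 2 - 2 = N from by omega,
        show 1 + i - 2 = i - 1 from by omega]
    have hif : (if 2 ≤ 1 + i then (Nat.choose N (i - 1) : ℚ) else 0)
        = (if 1 ≤ i then (Nat.choose N (i - 1) : ℚ) else 0) := by
      congr 1
      simp only [eq_iff_iff]
      omega
    rw [hif]
    have hcpow : genFibU (m : ℚ) (L + 1) ^ (((N + 2 : ℕ) : ℤ) - ((1 + i : ℕ) : ℤ) - 1) * c
        = c ^ ((N + 1 - i : ℕ) : ℤ) := by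
      rw [← hc_def, ← zpow_add_one₀ hc]
      congr 1
      have h1 : i ≤ N + 1 := by omega
      push_cast [h1]
      ring
    have hbpow : b ^ (((1 + i : ℕ) : ℤ) - 2) * b = b ^ ((i : ℕ) : ℤ) := by
      rw [← zpow_add_one₀ hb]
      congr 1
      push_cast
      ring
    calc genFibU (m : ℚ) ((N + 1) * p + i) *
          genFibU (m : ℚ) (L + 1) ^ (((N + 2 : ℕ) : ℤ) - ((1 + i : ℕ) : ℤ) - 1) *
          b ^ (((1 + i : ℕ) : ℤ) - 2) *
          (b ^ 2 * (Nat.choose (N + 1) i : ℚ) +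
            (-1 : ℚ) ^ (L + 2) * (if 1 ≤ i then (Nat.choose N (i - 1) : ℚ) else 0)) * (c * b)
        = genFibU (m : ℚ) ((N + 1) * p + i) *
          (genFibU (m : ℚ) (L + 1) ^ (((N + 2 : ℕ) : ℤ) - ((1 + i : ℕ) : ℤ) - 1) * c) *
          (b ^ (((1 + i : ℕ) : ℤ) - 2) * b) *
          (b ^ 2 * (Nat.choose (N + 1) i : ℚ) +
            (-1 : ℚ) ^ (L + 2) * (if 1 ≤ i then (Nat.choose N (i - 1) : ℚ) else 0)) := by
          ring
      _ = _ := by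
          rw [hcpow, hbpow, zpow_natCast, zpow_natCast]
  rw [show N + 2 + 1 - 1 = (N + 2).succ - 1 from rfl, Finset.sum_congr rfl hterm,
      show (N + 2).succ - 1 = N + 2 from rfl, Finset.sum_range_succ']
  have hcas : (-1 : ℚ) ^ (L + 2) = a * c - b ^ 2 := by
    have h := genFibU_cassini (m : ℚ) (L + 1)
    rw [show L + 1 + 2 = L + 3 from by omega, ← hc_def, ← hb_def, ← ha_def] at h
    linear_combination -h
  have hsplit : ∀ i ∈ Finset.range (N + 1),
      genFibU (m : ℚ) ((N + 1) * p + (i + 1)) * c ^ (N + 1 - (i + 1)) * b ^ (i + 1) *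
          (b ^ 2 * (Nat.choose (N + 1) (i + 1) : ℚ) +
            (-1 : ℚ) ^ (L + 2) * (if 1 ≤ i + 1 then (Nat.choose N (i + 1 - 1) : ℚ) else 0))
        = (Nat.choose N (i + 1) : ℚ) * genFibU (m : ℚ) ((N + 1) * p + (i + 1)) * c ^ (N - i)
              * b ^ (i + 3)
          + (Nat.choose N i : ℚ) * genFibU (m : ℚ) ((N + 1) * p + (i + 1)) * c ^ (N - i)
              * b ^ (i + 1) * a * c := by
    intro i hi
    rw [show N + 1 - (i + 1) = N - i from by omega, if_pos (by omega : 1 ≤ i + 1),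
        show i + 1 - 1 = i from by omega, Nat.choose_succ_succ, hcas]
    push_cast
    ring
  rw [Finset.sum_congr rfl hsplit, Finset.sum_add_distrib]
  have hA : (∑ i ∈ Finset.range (N + 1),
        (Nat.choose N (i + 1) : ℚ) * genFibU (m : ℚ) ((N + 1) * p + (i + 1)) * c ^ (N - i)
          * b ^ (i + 3))
      + genFibU (m : ℚ) ((N + 1) * p + 0) * c ^ (N + 1 - 0) * b ^ 0 *
          (b ^ 2 * (Nat.choose (N + 1) 0 : ℚ) +
            (-1 : ℚ) ^ (L + 2) * (if 1 ≤ 0 then (Nat.choose N (0 - 1) : ℚ) else 0))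
      = ∑ i ∈ Finset.range (N + 1),
          (Nat.choose N i : ℚ) * genFibU (m : ℚ) ((N + 1) * p + i) * c ^ (N + 1 - i)
            * b ^ (i + 2) := by
    conv_rhs => rw [Finset.sum_range_succ']
    conv_lhs => rw [Finset.sum_range_succ]
    rw [add_assoc]
    congr 1
    · apply Finset.sum_congr rfl
      intro i hi
      simp only [Finset.mem_range] at hi
      rw [show N + 1 - (i + 1) = N - i from by omega]
    · simp [Nat.choose_succ_self]
  rw [add_assoc, show ∀ x y z : ℚ, x + (y + z) = (x + z) + y from by intros; ring, hA,
      ← Finset.sum_add_distrib]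
  have hcomb : ∀ i ∈ Finset.range (N + 1),
      (Nat.choose N i : ℚ) * genFibU (m : ℚ) ((N + 1) * p + i) * c ^ (N + 1 - i) * b ^ (i + 2)
        + (Nat.choose N i : ℚ) * genFibU (m : ℚ) ((N + 1) * p + (i + 1)) * c ^ (N - i)
            * b ^ (i + 1) * a * c
      = ((Nat.choose N i : ℚ) * c ^ (N - i) * b ^ i
          * genFibU (m : ℚ) ((N + 1) * p + (L + 2) + 1 + i)) * (c * b) := by
    intro i hi
    simp only [Finset.mem_range] at hi
    have hadd := genFibU_add (m : ℚ) ((N + 1) * p + i) (L + 2)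
    rw [show L + 2 + 1 = L + 3 from by omega, ← ha_def, ← hb_def] at hadd
    rw [show (N + 1) * p + (L + 2) + 1 + i = (N + 1) * p + i + (L + 2) + 1 from by ring, hadd,
        show (N + 1) * p + i + 1 = (N + 1) * p + (i + 1) from by ring,
        show N + 1 - i = (N - i) + 1 from by omega]
    ring
  rw [Finset.sum_congr rfl hcomb, ← Finset.sum_mul]
  have hshift := genFibU_sum_shift (m : ℚ) (L + 1) N ((N + 1) * p + (L + 2) + 1)
  rw [show L + 1 + 1 = L + 2 from by omega, ← hc_def, ← hb_def] at hshift
  rw [hshift, show (N + 1) * p + (L + 2) + 1 + N * (L + 2)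
        = (N + 2 - 1) * (L + 2 + p) + 1 from by rw [show N + 2 - 1 = N + 1 from by omega]; ring]
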